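/- arXiv:1710.00892 — 6 statements merged into one kernel-verified Lean document; each statement's English description precedes it below -/
import Mathlib

section
/- Let O ⊆ ℝ^k be open and convex, let C : O → ℝ be twice continuously differentiable, fix λ > 1 and a set of directions V ⊆ ℝ^k, and assume that for every v ∈ V the map η ↦ ⟨v, (∇²C(η))·v⟩ is convex on O. For b ∈ ℝ^k define e_b(η) = (C(η + (1−λ)·b) − λ·C(η))/(λ−1) + C(η + b) on O_b = {η : η ∈ O, η + b ∈ O, η + (1−λ)·b ∈ O}. Then: (i) for every b ∈ ℝ^k, every v ∈ V, and every η ∈ O_b, the second directional derivative satisfies ⟨v, (∇²e_b(η))·v⟩ ≥ 0, so e_b is convex along every line with direction in V; and (ii) for any set of offsets Bset ⊆ ℝ^k, the function f(η) = sup_{b ∈ Bset} e_b(η) is convex on every segment with direction in V that is contained in ∩_{b ∈ Bset} O_b. -/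
/-!
STATEMENT 2: Let `O ⊆ ℝ^k` be open and convex, `C : O → ℝ` twice continuously
differentiable, `λ > 1`, and `V ⊆ ℝ^k` a set of directions such that for every `v ∈ V`
the map `η ↦ ⟨v, (∇²C(η))v⟩` is convex on `O`.  For `b ∈ ℝ^k` define
`e_b(η) = (C(η + (1−λ)b) − λC(η))/(λ−1) + C(η + b)` on
`O_b = {η ∈ O : η + b ∈ O, η + (1−λ)b ∈ O}`.  Then:
(i) `⟨v, (∇²e_b(η))v⟩ ≥ 0` for all `b`, `v ∈ V`, `η ∈ O_b`, so `e_b` is convex along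
every line with direction in `V`; and
(ii) for any set of offsets `Bset`, the function `f(η) = sup_{b ∈ Bset} e_b(η)` is
convex on every segment with direction in `V` contained in `∩_{b ∈ Bset} O_b`.
-/

open MeasureTheory

variable {k : ℕ}

/-- `e_b(η) = (C(η + (1−λ)·b) − λ·C(η))/(λ−1) + C(η + b)`. -/
noncomputable def renyiObjective (C : EuclideanSpace ℝ (Fin k) → ℝ) (l : ℝ)
    (b η : EuclideanSpace ℝ (Fin k)) : ℝ :=
  (C (η + (1 - l) • b) - l * C η) / (l - 1) + C (η + b)

/-- The domain `O_b = {η : η ∈ O, η + b ∈ O, η + (1−λ)·b ∈ O}`. -/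
def renyiDomain (O : Set (EuclideanSpace ℝ (Fin k))) (l : ℝ)
    (b : EuclideanSpace ℝ (Fin k)) : Set (EuclideanSpace ℝ (Fin k)) :=
  {η | η ∈ O ∧ η + b ∈ O ∧ η + (1 - l) • b ∈ O}

/-!
Since `e_b` is a linear combination of translates of `C`, its second derivative in direction `v`
is the same combination formed with `φ(η) = ⟨v, ∇²C(η) v⟩` in place of `C`. Because
`η = (1/λ)(η + (1-λ)b) + ((λ-1)/λ)(η + b)`, Jensen's inequality for the convex function `φ`
says exactly that this combination is nonnegative. So `e_b` is convex on every segment with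
direction in `V`, and hence so is a pointwise supremum of such functions.
-/

open AffineMap Set

section LineRestriction
variable {E : Type*} [NormedAddCommGroup E] [NormedSpace ℝ E] {f : E → ℝ} {x y : E} {t : ℝ}

theorem hasDerivAt_comp_lineMap (hf : DifferentiableAt ℝ f (lineMap x y t)) :
    HasDerivAt (fun s => f (lineMap x y s)) (fderiv ℝ f (lineMap x y t) (y - x)) t :=
  hf.hasFDerivAt.comp_hasDerivAt t hasDerivAt_lineMap

theorem hasDerivAt_fderiv_comp_lineMap (hf : ContDiffAt ℝ 2 f (lineMap x y t)) :
    HasDerivAt (fun s => fderiv ℝ f (lineMap x y s) (y - x))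
      (iteratedFDeriv ℝ 2 f (lineMap x y t) ![y - x, y - x]) t := by
  have hdf : DifferentiableAt ℝ (fderiv ℝ f) (lineMap x y t) :=
    (hf.fderiv_right (m := 1) (by norm_num)).differentiableAt (by norm_num)
  have h := (hdf.clm_apply (differentiableAt_const (y - x))).hasFDerivAt.comp_hasDerivAt t
    hasDerivAt_lineMap
  rw [fderiv_clm_apply hdf (differentiableAt_const _)] at h
  simp only [fderiv_const_apply, ContinuousLinearMap.comp_zero, zero_add,
    ContinuousLinearMap.flip_apply] at h
  rw [iteratedFDeriv_two_apply]
  exact h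

theorem convexOn_segment_of_iteratedFDeriv_two_nonneg
    (hf : ∀ z ∈ segment ℝ x y, ContDiffAt ℝ 2 f z)
    (hf₂ : ∀ z ∈ segment ℝ x y, 0 ≤ iteratedFDeriv ℝ 2 f z ![y - x, y - x]) :
    ConvexOn ℝ (segment ℝ x y) f := by
  have hmem : ∀ s ∈ Icc (0 : ℝ) 1, (lineMap x y s : E) ∈ segment ℝ x y := fun s hs => by
    rw [segment_eq_image_lineMap]; exact mem_image_of_mem _ hs
  have hd : ∀ s ∈ Icc (0 : ℝ) 1, DifferentiableAt ℝ f (lineMap x y s) := fun s hs =>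
    (hf _ (hmem s hs)).differentiableAt two_ne_zero
  have hg : ConvexOn ℝ (Icc 0 1) (fun s : ℝ => f (lineMap x y s)) := by
    refine convexOn_of_hasDerivWithinAt2_nonneg (convex_Icc 0 1)
      (f' := fun s => fderiv ℝ f (lineMap x y s) (y - x))
      (f'' := fun s => iteratedFDeriv ℝ 2 f (lineMap x y s) ![y - x, y - x]) ?_ ?_ ?_ ?_
    · exact fun s hs => (hasDerivAt_comp_lineMap (hd s hs)).continuousAt.continuousWithinAt
    · exact fun s hs => (hasDerivAt_comp_lineMap (hd s (interior_subset hs))).hasDerivWithinAt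
    · exact fun s hs =>
        (hasDerivAt_fderiv_comp_lineMap (hf _ (hmem s (interior_subset hs)))).hasDerivWithinAt
    · exact fun s hs => hf₂ _ (hmem s (interior_subset hs))
  refine ⟨convex_segment x y, ?_⟩
  rw [segment_eq_image_lineMap]
  rintro _ ⟨σ, hσ, rfl⟩ _ ⟨τ, hτ, rfl⟩ a b ha hb hab
  rw [← Convex.combo_affine_apply hab]
  exact hg.2 hσ hτ ha hb hab

end LineRestriction

theorem MultilinearMap.map_smul_smul_two {R M N : Type*} [CommSemiring R] [AddCommMonoid M]
    [AddCommMonoid N] [Module R M] [Module R N] (f : MultilinearMap R (fun _ : Fin 2 => M) N)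
    (c : R) (v : M) : f ![c • v, c • v] = c ^ 2 • f ![v, v] := by
  have h : ![c • v, c • v] = fun i => c • ![v, v] i := by
    ext i; fin_cases i <;> rfl
  rw [h, f.map_smul_univ, Fin.prod_const]

theorem EReal.biSup_le_mul_biSup_add_mul_biSup {ι : Type*} {B : Set ι} {u p q : ι → ℝ}
    {s t : ℝ} (hs : 0 ≤ s) (ht : 0 ≤ t) (h : ∀ i ∈ B, u i ≤ s * p i + t * q i) :
    (⨆ i ∈ B, (u i : EReal)) ≤
      (s : EReal) * (⨆ i ∈ B, (p i : EReal)) + (t : EReal) * (⨆ i ∈ B, (q i : EReal)) := by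
  refine iSup₂_le fun i hi => ?_
  calc (u i : EReal) ≤ (s : EReal) * p i + (t : EReal) * q i := by exact_mod_cast h i hi
    _ ≤ _ := add_le_add
      (mul_le_mul_of_nonneg_left (le_iSup₂ (f := fun i (_ : i ∈ B) => (p i : EReal)) i hi)
        (EReal.coe_nonneg.2 hs))
      (mul_le_mul_of_nonneg_left (le_iSup₂ (f := fun i (_ : i ∈ B) => (q i : EReal)) i hi)
        (EReal.coe_nonneg.2 ht))

section Renyi

variable {O : Set (EuclideanSpace ℝ (Fin k))} {C : EuclideanSpace ℝ (Fin k) → ℝ} {l : ℝ}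
  {b x : EuclideanSpace ℝ (Fin k)}

theorem isOpen_renyiDomain (hO : IsOpen O) (l : ℝ) (b : EuclideanSpace ℝ (Fin k)) :
    IsOpen (renyiDomain O l b) :=
  hO.inter ((hO.preimage (continuous_add_const b)).inter (hO.preimage (continuous_add_const _)))

theorem renyiObjective_nonneg_of_convexOn (hl : 1 < l) (hC : ConvexOn ℝ O C)
    (hx : x ∈ renyiDomain O l b) : 0 ≤ renyiObjective C l b x := by
  obtain ⟨h₀, h₁, h₂⟩ := hx
  have hl₀ : 0 < l := by linarith
  have hl₁ : 0 < l - 1 := by linarith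
  have hcomb : (1 / l) • (x + (1 - l) • b) + ((l - 1) / l) • (x + b) = x := by
    match_scalars <;> field_simp <;> ring
  have hJensen := hC.2 h₂ h₁ (by positivity : (0 : ℝ) ≤ 1 / l)
    (by positivity : 0 ≤ (l - 1) / l) (by rw [← add_div, add_sub_cancel, div_self hl₀.ne'])
  rw [hcomb, smul_eq_mul, smul_eq_mul] at hJensen
  rw [renyiObjective, div_add' _ _ _ hl₁.ne', le_div_iff₀ hl₁]
  have := mul_le_mul_of_nonneg_left hJensen hl₀.le
  field_simp at this
  linarith

theorem contDiffAt_renyiObjective {n : WithTop ℕ∞} (hO : IsOpen O) (hC : ContDiffOn ℝ n C O)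
    (hx : x ∈ renyiDomain O l b) : ContDiffAt ℝ n (renyiObjective C l b) x := by
  obtain ⟨h₀, h₁, h₂⟩ := hx
  have hC' : ∀ y ∈ O, ContDiffAt ℝ n C y := fun y hy => hC.contDiffAt (hO.mem_nhds hy)
  exact (((hC' _ h₂).comp x (contDiffAt_id.add contDiffAt_const)).sub
    (contDiffAt_const.mul (hC' x h₀))).div_const _ |>.add
    ((hC' _ h₁).comp x (contDiffAt_id.add contDiffAt_const))

theorem iteratedFDeriv_renyiObjective_apply {i : ℕ} (hO : IsOpen O) (hC : ContDiffOn ℝ i C O)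
    (hx : x ∈ renyiDomain O l b) (m : Fin i → EuclideanSpace ℝ (Fin k)) :
    iteratedFDeriv ℝ i (renyiObjective C l b) x m =
      renyiObjective (fun η => iteratedFDeriv ℝ i C η m) l b x := by
  obtain ⟨h₀, h₁, h₂⟩ := hx
  have hC' : ∀ y ∈ O, ContDiffAt ℝ i C y := fun y hy => hC.contDiffAt (hO.mem_nhds hy)
  have hshift : ∀ a, x + a ∈ O → ContDiffAt ℝ i (fun η => C (η + a)) x := fun a ha =>
    (hC' _ ha).comp x (contDiffAt_id.add contDiffAt_const)
  have hform : renyiObjective C l b =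
      fun η => (l - 1)⁻¹ • (C (η + (1 - l) • b) - l • C η) + C (η + b) := by
    ext η; simp only [renyiObjective, smul_eq_mul]; ring
  rw [hform, fun_iteratedFDeriv_add_apply ((hshift _ h₂).sub ((hC' x h₀).const_smul l)
    |>.const_smul _) (hshift b h₁), iteratedFDeriv_const_smul_apply' ((hshift _ h₂).sub
    ((hC' x h₀).const_smul l)), fun_iteratedFDeriv_sub_apply (hshift _ h₂)
    ((hC' x h₀).const_smul l), iteratedFDeriv_const_smul_apply' (hC' x h₀),
    iteratedFDeriv_comp_add_right, iteratedFDeriv_comp_add_right]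
  simp only [renyiObjective, add_apply, sub_apply, smul_apply, smul_eq_mul]
  ring

theorem iteratedFDeriv_renyiObjective_two_nonneg (hO : IsOpen O) (hC : ContDiffOn ℝ 2 C O)
    (hl : 1 < l) {v : EuclideanSpace ℝ (Fin k)}
    (hv : ConvexOn ℝ O fun η => iteratedFDerivWithin ℝ 2 C O η ![v, v])
    (hx : x ∈ renyiDomain O l b) :
    0 ≤ iteratedFDeriv ℝ 2 (renyiObjective C l b) x ![v, v] := by
  rw [iteratedFDeriv_renyiObjective_apply hO hC hx]
  refine renyiObjective_nonneg_of_convexOn hl (hv.congr fun η hη => ?_) hx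
  simp only [iteratedFDerivWithin_of_isOpen 2 hO hη]

theorem convexOn_segment_renyiObjective (hO : IsOpen O) (hC : ContDiffOn ℝ 2 C O) (hl : 1 < l)
    {v y : EuclideanSpace ℝ (Fin k)} {c : ℝ}
    (hv : ConvexOn ℝ O fun η => iteratedFDerivWithin ℝ 2 C O η ![v, v])
    (hdir : y - x = c • v) (hseg : segment ℝ x y ⊆ renyiDomain O l b) :
    ConvexOn ℝ (segment ℝ x y) (renyiObjective C l b) := by
  refine convexOn_segment_of_iteratedFDeriv_two_nonneg
    (fun z hz => contDiffAt_renyiObjective hO hC (hseg hz)) fun z hz => ?_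
  rw [hdir, ← ContinuousMultilinearMap.coe_coe, MultilinearMap.map_smul_smul_two, smul_eq_mul]
  exact mul_nonneg (sq_nonneg c) (iteratedFDeriv_renyiObjective_two_nonneg hO hC hl hv (hseg hz))

end Renyi

theorem renyi_objective_convexity_general
    (O : Set (EuclideanSpace ℝ (Fin k))) (hO : IsOpen O)
    (C : EuclideanSpace ℝ (Fin k) → ℝ) (hC : ContDiffOn ℝ 2 C O)
    (l : ℝ) (hl : 1 < l) (V : Set (EuclideanSpace ℝ (Fin k)))
    (hV : ∀ v ∈ V,
      ConvexOn ℝ O (fun η => iteratedFDerivWithin ℝ 2 C O η ![v, v])) :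
    -- (i) nonnegativity of the second directional derivative of `e_b` ...
    (∀ b : EuclideanSpace ℝ (Fin k), ∀ v ∈ V, ∀ η ∈ renyiDomain O l b,
      0 ≤ iteratedFDerivWithin ℝ 2 (renyiObjective C l b) (renyiDomain O l b) η ![v, v]) ∧
    (∀ b : EuclideanSpace ℝ (Fin k), ∀ v ∈ V, ∀ η₁ η₂ : EuclideanSpace ℝ (Fin k),
      (∃ c : ℝ, η₂ - η₁ = c • v) → segment ℝ η₁ η₂ ⊆ renyiDomain O l b →
      ConvexOn ℝ (segment ℝ η₁ η₂) (renyiObjective C l b)) ∧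
    -- (ii) `f(η) = sup_{b ∈ Bset} e_b(η)` is convex on every segment with direction
    -- in `V` contained in `∩_{b ∈ Bset} O_b`:
    (∀ Bset : Set (EuclideanSpace ℝ (Fin k)), ∀ η₁ η₂ : EuclideanSpace ℝ (Fin k),
      (∃ v ∈ V, ∃ c : ℝ, η₂ - η₁ = c • v) →
      segment ℝ η₁ η₂ ⊆ (⋂ b ∈ Bset, renyiDomain O l b) →
      ∀ s t : ℝ, 0 ≤ s → 0 ≤ t → s + t = 1 →
        (⨆ b ∈ Bset, ((renyiObjective C l b (s • η₁ + t • η₂) : ℝ) : EReal)) ≤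
          (s : EReal) * (⨆ b ∈ Bset, ((renyiObjective C l b η₁ : ℝ) : EReal))
            + (t : EReal) * (⨆ b ∈ Bset, ((renyiObjective C l b η₂ : ℝ) : EReal))) := by
  refine ⟨fun b v hv η hη => ?_, fun b v hv η₁ η₂ ⟨c, hdir⟩ hseg =>
    convexOn_segment_renyiObjective hO hC hl (hV v hv) hdir hseg, ?_⟩
  · rw [iteratedFDerivWithin_of_isOpen 2 (isOpen_renyiDomain hO l b) hη]
    exact iteratedFDeriv_renyiObjective_two_nonneg hO hC hl (hV v hv) hη
  · rintro Bset η₁ η₂ ⟨v, hv, c, hdir⟩ hseg s t hs ht hst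
    refine EReal.biSup_le_mul_biSup_add_mul_biSup hs ht fun b hb => ?_
    have hconv := convexOn_segment_renyiObjective hO hC hl (hV v hv) hdir
      fun z hz => Set.mem_iInter₂.1 (hseg hz) b hb
    exact hconv.2 (left_mem_segment ℝ η₁ η₂) (right_mem_segment ℝ η₁ η₂) hs ht hst

theorem renyi_objective_convexity
    (O : Set (EuclideanSpace ℝ (Fin k))) (hO : IsOpen O) (hOconv : Convex ℝ O)
    (C : EuclideanSpace ℝ (Fin k) → ℝ) (hC : ContDiffOn ℝ 2 C O)
    (l : ℝ) (hl : 1 < l) (V : Set (EuclideanSpace ℝ (Fin k)))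
    (hV : ∀ v ∈ V,
      ConvexOn ℝ O (fun η => iteratedFDerivWithin ℝ 2 C O η ![v, v])) :
    -- (i) nonnegativity of the second directional derivative of `e_b` ...
    (∀ b : EuclideanSpace ℝ (Fin k), ∀ v ∈ V, ∀ η ∈ renyiDomain O l b,
      0 ≤ iteratedFDerivWithin ℝ 2 (renyiObjective C l b) (renyiDomain O l b) η ![v, v]) ∧
    (∀ b : EuclideanSpace ℝ (Fin k), ∀ v ∈ V, ∀ η₁ η₂ : EuclideanSpace ℝ (Fin k),
      (∃ c : ℝ, η₂ - η₁ = c • v) → segment ℝ η₁ η₂ ⊆ renyiDomain O l b →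
      ConvexOn ℝ (segment ℝ η₁ η₂) (renyiObjective C l b)) ∧
    -- (ii) `f(η) = sup_{b ∈ Bset} e_b(η)` is convex on every segment with direction
    -- in `V` contained in `∩_{b ∈ Bset} O_b`:
    (∀ Bset : Set (EuclideanSpace ℝ (Fin k)), ∀ η₁ η₂ : EuclideanSpace ℝ (Fin k),
      (∃ v ∈ V, ∃ c : ℝ, η₂ - η₁ = c • v) →
      segment ℝ η₁ η₂ ⊆ (⋂ b ∈ Bset, renyiDomain O l b) →
      ∀ s t : ℝ, 0 ≤ s → 0 ≤ t → s + t = 1 →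
        (⨆ b ∈ Bset, ((renyiObjective C l b (s • η₁ + t • η₂) : ℝ) : EReal)) ≤
          (s : EReal) * (⨆ b ∈ Bset, ((renyiObjective C l b η₁ : ℝ) : EReal))
            + (t : EReal) * (⨆ b ∈ Bset, ((renyiObjective C l b η₂ : ℝ) : EReal))) :=
  renyi_objective_convexity_general O hO C hC l hl V hV
end

section
/- Let C : ℝ^k → ℝ be twice continuously differentiable, let λ > 1, let η_P, η_Q ∈ ℝ^k, and let H ≥ 0 be such that the operator norm of the Hessian satisfies ‖∇²C(η)‖ ≤ H for every η in the segment set {η_P + x·(η_P − η_Q) : x ∈ ℝ, |x| ≤ max(1, λ−1)}. Then (C(λ·η_P + (1−λ)·η_Q) − λ·C(η_P))/(λ−1) + C(η_Q) ≤ λ·H·‖η_P − η_Q‖². In particular, if C is the log-partition function of an exponential family and both parameters are normalizable, then D_λ(P_{η_P} ‖ P_{η_Q}) ≤ λ·H·‖η_P − η_Q‖². -/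
/-!
Along the line `t ↦ C (η_P + t • (η_P - η_Q))` the Hessian bound gives the second-order Taylor
estimate `|C (η_P + t v) - C η_P - t ∇C(η_P) v| ≤ H t² ‖v‖²` at `t = λ - 1` and `t = -1`, the points
`λ η_P + (1 - λ) η_Q` and `η_Q`. Dividing the first by `λ - 1` and adding the second cancels the
first-order terms and leaves `(λ - 1) H ‖v‖² + H ‖v‖² = λ H ‖v‖²`.
-/

section Taylor

variable {E F : Type*} [NormedAddCommGroup E] [NormedSpace ℝ E]
  [NormedAddCommGroup F] [NormedSpace ℝ F]

theorem norm_sub_sub_fderiv_le_of_norm_iteratedFDeriv_two_le {f : E → F} (hf : ContDiff ℝ 2 f)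
    {x y : E} {M : ℝ} (hM : ∀ z ∈ segment ℝ x y, ‖iteratedFDeriv ℝ 2 f z‖ ≤ M) :
    ‖f y - f x - fderiv ℝ f x (y - x)‖ ≤ M * ‖y - x‖ ^ 2 := by
  have hM0 : 0 ≤ M := (norm_nonneg _).trans (hM x (left_mem_segment ℝ x y))
  have hf₁ : Differentiable ℝ f := hf.differentiable (by norm_num)
  have hf₂ : Differentiable ℝ (fderiv ℝ f) :=
    (hf.fderiv_right (m := 1) (by norm_num)).differentiable (by norm_num)
  have hlip : ∀ z ∈ segment ℝ x y, ‖fderiv ℝ f z - fderiv ℝ f x‖ ≤ M * ‖y - x‖ := by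
    intro z hz
    calc ‖fderiv ℝ f z - fderiv ℝ f x‖ ≤ M * ‖z - x‖ :=
          (convex_segment x y).norm_image_sub_le_of_norm_hasFDerivWithin_le
            (fun w _ => (hf₂ w).hasFDerivAt.hasFDerivWithinAt)
            (fun w hw => by
              rw [← norm_iteratedFDeriv_one, norm_iteratedFDeriv_fderiv]
              exact hM w hw)
            (left_mem_segment ℝ x y) hz
      _ ≤ M * ‖y - x‖ := by gcongr; exact norm_sub_le_of_mem_segment hz
  calc ‖f y - f x - fderiv ℝ f x (y - x)‖ ≤ M * ‖y - x‖ * ‖y - x‖ :=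
        (convex_segment x y).norm_image_sub_le_of_norm_hasFDerivWithin_le'
          (fun w _ => (hf₁ w).hasFDerivAt.hasFDerivWithinAt) hlip
          (left_mem_segment ℝ x y) (right_mem_segment ℝ x y)
    _ = M * ‖y - x‖ ^ 2 := by ring

theorem norm_sub_sub_smul_fderiv_le_of_norm_iteratedFDeriv_two_le {f : E → F}
    (hf : ContDiff ℝ 2 f) (x v : E) {t M : ℝ}
    (hM : ∀ s : ℝ, |s| ≤ |t| → ‖iteratedFDeriv ℝ 2 f (x + s • v)‖ ≤ M) :
    ‖f (x + t • v) - f x - t • fderiv ℝ f x v‖ ≤ M * t ^ 2 * ‖v‖ ^ 2 := by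
  have h := norm_sub_sub_fderiv_le_of_norm_iteratedFDeriv_two_le hf (x := x) (y := x + t • v)
    (M := M) fun z hz => by
      rw [segment_eq_image'] at hz
      obtain ⟨θ, ⟨hθ₀, hθ₁⟩, rfl⟩ := hz
      dsimp only
      rw [add_sub_cancel_left, smul_smul]
      refine hM _ ?_
      rw [abs_mul, abs_of_nonneg hθ₀]
      exact mul_le_of_le_one_left (abs_nonneg t) hθ₁
  rwa [add_sub_cancel_left, map_smul, norm_smul, mul_pow, Real.norm_eq_abs, sq_abs,
    ← mul_assoc] at h

end Taylor

theorem renyi_gap_le_of_quadratic_remainder {l a b c d K : ℝ} (hl : 1 < l)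
    (hplus : a - c - (l - 1) * d ≤ K * (l - 1) ^ 2) (hminus : b - c - (-1) * d ≤ K * (-1) ^ 2) :
    (a - l * c) / (l - 1) + b ≤ l * K := by
  have hl₁ : 0 < l - 1 := sub_pos.mpr hl
  rw [div_add' _ _ _ hl₁.ne', div_le_iff₀ hl₁]
  nlinarith

theorem renyi_divergence_hessian_bound_general {k : ℕ}
    (C : EuclideanSpace ℝ (Fin k) → ℝ) (hC : ContDiff ℝ 2 C)
    (l : ℝ) (hl : 1 < l) (ηP ηQ : EuclideanSpace ℝ (Fin k)) (H : ℝ)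
    (hHess : ∀ x : ℝ, |x| ≤ max 1 (l - 1) →
      ‖iteratedFDeriv ℝ 2 C (ηP + x • (ηP - ηQ))‖ ≤ H) :
    (C (l • ηP + (1 - l) • ηQ) - l * C ηP) / (l - 1) + C ηQ ≤ l * H * ‖ηP - ηQ‖ ^ 2 := by
  set v := ηP - ηQ
  have hquad : ∀ t : ℝ, |t| ≤ max 1 (l - 1) →
      C (ηP + t • v) - C ηP - t * fderiv ℝ C ηP v ≤ H * ‖v‖ ^ 2 * t ^ 2 := fun t ht => by
    have h := norm_sub_sub_smul_fderiv_le_of_norm_iteratedFDeriv_two_le hC ηP v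
      fun s hs => hHess s (hs.trans ht)
    rw [Real.norm_eq_abs, smul_eq_mul] at h
    linarith [le_abs_self (C (ηP + t • v) - C ηP - t * fderiv ℝ C ηP v)]
  have hplus : ηP + (l - 1) • v = l • ηP + (1 - l) • ηQ := by module
  have hminus : ηP + (-1 : ℝ) • v = ηQ := by module
  have hgap := renyi_gap_le_of_quadratic_remainder hl
    (hquad (l - 1) (by rw [abs_of_pos (by linarith)]; exact le_max_right _ _))
    (hquad (-1) (by rw [abs_neg, abs_one]; exact le_max_left _ _))
  rw [hplus, hminus] at hgap
  linarith

theorem renyi_divergence_hessian_bound {k : ℕ}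
    (C : EuclideanSpace ℝ (Fin k) → ℝ) (hC : ContDiff ℝ 2 C)
    (l : ℝ) (hl : 1 < l) (ηP ηQ : EuclideanSpace ℝ (Fin k)) (H : ℝ) (hH : 0 ≤ H)
    (hHess : ∀ x : ℝ, |x| ≤ max 1 (l - 1) →
      ‖iteratedFDeriv ℝ 2 C (ηP + x • (ηP - ηQ))‖ ≤ H) :
    (C (l • ηP + (1 - l) • ηQ) - l * C ηP) / (l - 1) + C ηQ ≤ l * H * ‖ηP - ηQ‖ ^ 2 :=
  renyi_divergence_hessian_bound_general C hC l hl ηP ηQ H hHess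
end

section
/- Let a, b, a', b' > 0 and λ > 1 with λa + (1−λ)a' > 0 and λb + (1−λ)b' > 0. Then D_λ(Beta(a,b) ‖ Beta(a',b')) = (1/(λ−1))·(log B(λa + (1−λ)a', λb + (1−λ)b') − λ·log B(a,b)) + log B(a',b'). Moreover, if λa + (1−λ)a' ≤ 0 or λb + (1−λ)b' ≤ 0, then D_λ(Beta(a,b) ‖ Beta(a',b')) = +∞. -/
/-!
STATEMENT 6: For `a, b, a', b' > 0` and `λ > 1`:
if `λa + (1−λ)a' > 0` and `λb + (1−λ)b' > 0`, then
`D_λ(Beta(a,b) ‖ Beta(a',b')) = (1/(λ−1))·(log B(λa+(1−λ)a', λb+(1−λ)b') − λ·log B(a,b))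
  + log B(a',b')`;
moreover, if `λa + (1−λ)a' ≤ 0` or `λb + (1−λ)b' ≤ 0`, then
`D_λ(Beta(a,b) ‖ Beta(a',b')) = +∞`.
-/

open MeasureTheory ENNReal

/-- The Beta function `B(a, b) = Γ(a)Γ(b)/Γ(a+b)`. -/
noncomputable def betaFun (a b : ℝ) : ℝ :=
  Real.Gamma a * Real.Gamma b / Real.Gamma (a + b)

/-- Density of the `Beta(a, b)` distribution on `(0, 1)`:
`x ↦ x^{a−1}(1−x)^{b−1}/B(a,b)`. -/
noncomputable def betaPdf (a b : ℝ) (x : ℝ) : ℝ≥0∞ :=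
  ENNReal.ofReal (x ^ (a - 1) * (1 - x) ^ (b - 1) / betaFun a b)

/-- Rényi divergence of order `l > 1` between measures given by densities `p`, `q`
with respect to a common dominating measure `ν`, with value `+∞` if the integral
diverges. -/
noncomputable def renyiDiv {Ω : Type*} [MeasurableSpace Ω] (ν : Measure Ω)
    (p q : Ω → ℝ≥0∞) (l : ℝ) : EReal :=
  (((l - 1)⁻¹ : ℝ) : EReal) * ENNReal.log (∫⁻ ω, p ω ^ l * q ω ^ (1 - l) ∂ν)

/-- Rényi divergence of order `l` between `Beta(a, b)` and `Beta(a', b')`. -/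
noncomputable def renyiDivBeta (a b a' b' : ℝ) (l : ℝ) : EReal :=
  renyiDiv (volume.restrict (Set.Ioo (0 : ℝ) 1)) (betaPdf a b) (betaPdf a' b') l

/-!
On `(0, 1)` the integrand `p^λ q^(1-λ)` of the Rényi divergence between two Beta densities is
`(B(a,b)^λ B(a',b')^(1-λ))⁻¹` times the unnormalised Beta kernel `x^(α-1) (1-x)^(β-1)` with the
interpolated parameters `α = λa + (1-λ)a'`, `β = λb + (1-λ)b'`. When `α, β > 0` the kernel
integrates to `B(α, β)`; when `α ≤ 0` it dominates a multiple of the non-integrable `x^(α-1)`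
near `0` (and symmetrically near `1` when `β ≤ 0`), so the integral, and with it the divergence,
is infinite.
-/

open Set

lemma betaFun_pos {α β : ℝ} (hα : 0 < α) (hβ : 0 < β) : 0 < betaFun α β :=
  ProbabilityTheory.beta_pos hα hβ

noncomputable def betaKernel (α β x : ℝ) : ℝ :=
  x ^ (α - 1) * (1 - x) ^ (β - 1)

@[fun_prop]
lemma measurable_betaKernel (α β : ℝ) : Measurable (betaKernel α β) := by
  unfold betaKernel
  fun_prop

lemma betaKernel_pos (α β : ℝ) {x : ℝ} (hx : x ∈ Ioo (0 : ℝ) 1) : 0 < betaKernel α β x :=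
  mul_pos (Real.rpow_pos_of_pos hx.1 _) (Real.rpow_pos_of_pos (sub_pos.2 hx.2) _)

lemma betaKernel_one_sub (α β x : ℝ) : betaKernel α β (1 - x) = betaKernel β α x := by
  rw [betaKernel, betaKernel, show 1 - (1 - x) = x by ring, mul_comm]

lemma betaKernel_rpow_mul_rpow (a b a' b' l : ℝ) {x : ℝ} (hx : x ∈ Ioo (0 : ℝ) 1) :
    betaKernel a b x ^ l * betaKernel a' b' x ^ (1 - l) =
      betaKernel (l * a + (1 - l) * a') (l * b + (1 - l) * b') x := by
  have hx₀ : 0 < x := hx.1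
  have hx₁ : 0 < 1 - x := sub_pos.2 hx.2
  simp only [betaKernel]
  rw [Real.mul_rpow (by positivity) (by positivity), Real.mul_rpow (by positivity) (by positivity),
    ← Real.rpow_mul hx₀.le, ← Real.rpow_mul hx₁.le, ← Real.rpow_mul hx₀.le,
    ← Real.rpow_mul hx₁.le, mul_mul_mul_comm, ← Real.rpow_add hx₀, ← Real.rpow_add hx₁]
  ring_nf

lemma betaPdf_eq (α β x : ℝ) :
    betaPdf α β x = ENNReal.ofReal (betaKernel α β x / betaFun α β) :=
  rfl

lemma lintegral_betaKernel {α β : ℝ} (hα : 0 < α) (hβ : 0 < β) :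
    ∫⁻ x in Ioo (0 : ℝ) 1, ENNReal.ofReal (betaKernel α β x) = ENNReal.ofReal (betaFun α β) := by
  have hB := betaFun_pos hα hβ
  have h : ∫⁻ x in Ioo (0 : ℝ) 1, ENNReal.ofReal (1 / betaFun α β * betaKernel α β x) = 1 := by
    have := ProbabilityTheory.lintegral_betaPDF_eq_one hα hβ
    rw [ProbabilityTheory.lintegral_betaPDF] at this
    simp_rw [mul_assoc] at this
    exact this
  simp_rw [ENNReal.ofReal_mul (one_div_pos.2 hB).le] at h
  rw [lintegral_const_mul _ (by fun_prop), mul_comm] at h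
  rw [ENNReal.eq_inv_of_mul_eq_one_left h, ← ENNReal.ofReal_inv_of_pos (one_div_pos.2 hB),
    one_div, inv_inv]

lemma min_rpow_one_le_rpow {a y : ℝ} (s : ℝ) (ha : 0 < a) (hay : a ≤ y) (hy : y ≤ 1) :
    min (a ^ s) 1 ≤ y ^ s := by
  rcases le_total 0 s with hs | hs
  · exact (min_le_left _ _).trans (Real.rpow_le_rpow ha.le hay hs)
  · exact (min_le_right _ _).trans
      (Real.one_le_rpow_of_pos_of_le_one_of_nonpos (ha.trans_le hay) hy hs)

lemma not_intervalIntegrable_betaKernel {α : ℝ} (hα : α ≤ 0) (β : ℝ) :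
    ¬ IntervalIntegrable (betaKernel α β) volume 0 1 := by
  intro h
  set c := min ((1 / 2 : ℝ) ^ (β - 1)) 1
  have hc : 0 < c := lt_min (by positivity) one_pos
  have hkernel : IntegrableOn (betaKernel α β) (Ioo 0 (1 / 2)) :=
    ((intervalIntegrable_iff_integrableOn_Ioo_of_le zero_le_one).1 h).mono_set
      (Ioo_subset_Ioo_right (by norm_num))
  have hbound : ∀ x ∈ Ioo (0 : ℝ) (1 / 2), x ^ (α - 1) ≤ c⁻¹ * betaKernel α β x := by
    intro x hx
    rw [le_inv_mul_iff₀ hc, betaKernel, mul_comm c]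
    exact mul_le_mul_of_nonneg_left
      (min_rpow_one_le_rpow _ (by norm_num) (by linarith [hx.2]) (by linarith [hx.1]))
      (Real.rpow_nonneg hx.1.le _)
  have hpow : IntegrableOn (fun x : ℝ => x ^ (α - 1)) (Ioo 0 (1 / 2)) :=
    (hkernel.const_mul c⁻¹).mono' (by fun_prop) <|
      ae_restrict_of_forall_mem measurableSet_Ioo fun x hx => by
        rw [Real.norm_of_nonneg (Real.rpow_nonneg hx.1.le _)]
        exact hbound x hx
  have := (intervalIntegral.integrableOn_Ioo_rpow_iff (by norm_num)).1 hpow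
  linarith

lemma intervalIntegrable_betaKernel_symm {α β : ℝ}
    (h : IntervalIntegrable (betaKernel α β) volume 0 1) :
    IntervalIntegrable (betaKernel β α) volume 0 1 := by
  simpa [betaKernel_one_sub] using (h.comp_sub_left 1).symm

lemma lintegral_betaKernel_eq_top {α β : ℝ} (h : α ≤ 0 ∨ β ≤ 0) :
    ∫⁻ x in Ioo (0 : ℝ) 1, ENNReal.ofReal (betaKernel α β x) = ⊤ := by
  by_contra hfin
  have hint : IntervalIntegrable (betaKernel α β) volume 0 1 := by
    rw [intervalIntegrable_iff_integrableOn_Ioo_of_le zero_le_one]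
    refine (lintegral_ofReal_ne_top_iff_integrable (by fun_prop) ?_).1 hfin
    exact ae_restrict_of_forall_mem measurableSet_Ioo fun x hx => (betaKernel_pos α β hx).le
  rcases h with h | h
  · exact not_intervalIntegrable_betaKernel h β hint
  · exact not_intervalIntegrable_betaKernel h α (intervalIntegrable_betaKernel_symm hint)

lemma betaPdf_rpow_mul_rpow {a b a' b' : ℝ} (ha : 0 < a) (hb : 0 < b) (ha' : 0 < a')
    (hb' : 0 < b') (l : ℝ) {x : ℝ} (hx : x ∈ Ioo (0 : ℝ) 1) :
    betaPdf a b x ^ l * betaPdf a' b' x ^ (1 - l) =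
      ENNReal.ofReal ((betaFun a b ^ l * betaFun a' b' ^ (1 - l))⁻¹) *
        ENNReal.ofReal (betaKernel (l * a + (1 - l) * a') (l * b + (1 - l) * b') x) := by
  have hB := betaFun_pos ha hb
  have hB' := betaFun_pos ha' hb'
  have hk := betaKernel_pos a b hx
  have hk' := betaKernel_pos a' b' hx
  rw [← betaKernel_rpow_mul_rpow _ _ _ _ _ hx, betaPdf_eq, betaPdf_eq,
    ENNReal.ofReal_rpow_of_pos (div_pos hk hB), ENNReal.ofReal_rpow_of_pos (div_pos hk' hB'),
    ← ENNReal.ofReal_mul (by positivity), ← ENNReal.ofReal_mul (by positivity),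
    Real.div_rpow hk.le hB.le, Real.div_rpow hk'.le hB'.le]
  congr 1
  ring

lemma lintegral_betaPdf_rpow_mul_rpow {a b a' b' : ℝ} (ha : 0 < a) (hb : 0 < b) (ha' : 0 < a')
    (hb' : 0 < b') (l : ℝ) :
    ∫⁻ x in Ioo (0 : ℝ) 1, betaPdf a b x ^ l * betaPdf a' b' x ^ (1 - l) =
      ENNReal.ofReal ((betaFun a b ^ l * betaFun a' b' ^ (1 - l))⁻¹) *
        ∫⁻ x in Ioo (0 : ℝ) 1,
          ENNReal.ofReal (betaKernel (l * a + (1 - l) * a') (l * b + (1 - l) * b') x) := by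
  rw [← lintegral_const_mul _ (by fun_prop)]
  exact setLIntegral_congr_fun measurableSet_Ioo fun x hx =>
    betaPdf_rpow_mul_rpow ha hb ha' hb' l hx

section Renyi

variable {Ω : Type*} [MeasurableSpace Ω] {ν : Measure Ω} {p q : Ω → ℝ≥0∞} {l : ℝ}

lemma renyiDiv_eq_of_lintegral_eq_ofReal {C : ℝ} (hC : 0 < C)
    (h : ∫⁻ ω, p ω ^ l * q ω ^ (1 - l) ∂ν = ENNReal.ofReal C) :
    renyiDiv ν p q l = (((l - 1)⁻¹ * Real.log C : ℝ) : EReal) := by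
  rw [renyiDiv, h, ENNReal.log_ofReal_of_pos hC, EReal.coe_mul]

lemma renyiDiv_eq_top_of_lintegral_eq_top (hl : 1 < l)
    (h : ∫⁻ ω, p ω ^ l * q ω ^ (1 - l) ∂ν = ⊤) : renyiDiv ν p q l = ⊤ := by
  rw [renyiDiv, h, ENNReal.log_top]
  exact EReal.coe_mul_top_of_pos (inv_pos.2 (sub_pos.2 hl))

end Renyi

theorem renyi_divergence_beta (a b a' b' : ℝ)
    (ha : 0 < a) (hb : 0 < b) (ha' : 0 < a') (hb' : 0 < b')
    (l : ℝ) (hl : 1 < l) :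
    (0 < l * a + (1 - l) * a' → 0 < l * b + (1 - l) * b' →
      renyiDivBeta a b a' b' l =
        (((l - 1)⁻¹ * (Real.log (betaFun (l * a + (1 - l) * a') (l * b + (1 - l) * b'))
              - l * Real.log (betaFun a b))
          + Real.log (betaFun a' b') : ℝ) : EReal)) ∧
    (l * a + (1 - l) * a' ≤ 0 ∨ l * b + (1 - l) * b' ≤ 0 →
      renyiDivBeta a b a' b' l = ⊤) := by
  set α := l * a + (1 - l) * a'
  set β := l * b + (1 - l) * b'
  have hB := betaFun_pos ha hb
  have hB' := betaFun_pos ha' hb'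
  set Z := betaFun a b ^ l * betaFun a' b' ^ (1 - l)
  have hZ : 0 < Z⁻¹ := by positivity
  have hI := lintegral_betaPdf_rpow_mul_rpow ha hb ha' hb' l
  refine ⟨fun hα hβ => ?_, fun h => ?_⟩
  · have hBαβ := betaFun_pos hα hβ
    have hlog : Real.log (Z⁻¹ * betaFun α β) = Real.log (betaFun α β)
        - l * Real.log (betaFun a b) - (1 - l) * Real.log (betaFun a' b') := by
      rw [Real.log_mul hZ.ne' hBαβ.ne', Real.log_inv, Real.log_mul (by positivity) (by positivity),
        Real.log_rpow hB, Real.log_rpow hB']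
      ring
    rw [renyiDivBeta, renyiDiv_eq_of_lintegral_eq_ofReal (mul_pos hZ hBαβ)
      (by rw [hI, lintegral_betaKernel hα hβ, ENNReal.ofReal_mul hZ.le]), hlog]
    congr 1
    field_simp [sub_ne_zero.2 hl.ne']
    ring
  · refine renyiDiv_eq_top_of_lintegral_eq_top hl ?_
    rw [hI, lintegral_betaKernel_eq_top h, ENNReal.mul_top (ENNReal.ofReal_pos.2 hZ).ne']
end

section
/- In the logistic regression setup, for every dimension d > 1, every n ≥ 1, every c > 0, and every β > 0, there exist neighboring datasets D and D' of size n, whose feature vectors all satisfy ‖xᵢ‖₂ ≤ c, and a threshold λ₀ such that for every integer λ > λ₀, the Rényi divergence of order λ between the posteriors satisfies D_λ(p(·|D) ‖ p(·|D')) > c²·(λ − 1)/(2nβ). -/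
/-!
STATEMENT 15: In the logistic regression setup, for every `d > 1`, `n ≥ 1`, `c > 0` and
`β > 0` (prior `N(0, σ²I)` with `σ² = 1/(nβ)`), there exist neighboring datasets `D`, `D'`
of size `n` whose features satisfy `‖xᵢ‖ ≤ c` (and labels in `{−1, 1}`), and a threshold
`λ₀`, such that for every integer `λ > λ₀`,
`D_λ(p(·|D) ‖ p(·|D')) > c²·(λ − 1)/(2nβ)`.
-/

open MeasureTheory ENNReal
open scoped RealInnerProductSpace

variable {d n : ℕ}

/-- Unnormalized logistic-regression posterior density with Gaussian prior variance
`σsq`: `exp(−‖w‖²/(2σ²))·∏ᵢ 1/(1 + exp(−yᵢ⟨w, xᵢ⟩))`. -/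
noncomputable def logisticUnnormPost (σsq : ℝ)
    (D : Fin n → EuclideanSpace ℝ (Fin d) × ℝ) (w : EuclideanSpace ℝ (Fin d)) : ℝ :=
  Real.exp (-‖w‖ ^ 2 / (2 * σsq)) * ∏ i, (1 + Real.exp (-(D i).2 * ⟪w, (D i).1⟫))⁻¹

/-- Normalized logistic-regression posterior density (w.r.t. Lebesgue measure),
as an `ℝ≥0∞`-valued density. -/
noncomputable def logisticPostDens (σsq : ℝ)
    (D : Fin n → EuclideanSpace ℝ (Fin d) × ℝ) (w : EuclideanSpace ℝ (Fin d)) : ℝ≥0∞ :=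
  ENNReal.ofReal (logisticUnnormPost σsq D w) /
    ∫⁻ w', ENNReal.ofReal (logisticUnnormPost σsq D w')

/-- Two datasets are neighboring if they differ in exactly one example. -/
def Neighboring (D D' : Fin n → EuclideanSpace ℝ (Fin d) × ℝ) : Prop :=
  ∃ j, (∀ i, i ≠ j → D i = D' i) ∧ D j ≠ D' j

/-!
Take `D` with a single nonzero feature `x`, `‖x‖ = c`, label `1`, and let `D'` be `D` with `x`
negated, so that `p(w | D') = p(-w | D)`. The odds identity `σ(t) = eᵗ σ(-t)` gives
`p(w | D) = e^⟪w, x⟫ p(-w | D)`, hence `p(·|D)^λ p(·|D')^(1-λ) = e^((λ-1)⟪w, x⟫) p(·|D)`.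
Completing the square against the Gaussian prior, its integral is `exp(σ²(λ-1)²c²/2)` times the
prior mass of the likelihood shifted by `σ²(λ-1)x`, which exceeds the unshifted one because the
likelihood increases strictly in the direction `x`.
-/

section Renyi

variable {Ω : Type*} [MeasurableSpace Ω] {ν : Measure Ω}

lemma lintegral_div_rpow_mul_div_rpow {f g : Ω → ℝ≥0∞} (hf : ∀ ω, f ω ≠ ∞) (hg : ∀ ω, g ω ≠ ∞)
    {Z : ℝ≥0∞} (hZ₀ : Z ≠ 0) (hZ : Z ≠ ∞) (l : ℝ) :
    ∫⁻ ω, (f ω / Z) ^ l * (g ω / Z) ^ (1 - l) ∂ν = (∫⁻ ω, f ω ^ l * g ω ^ (1 - l) ∂ν) / Z := by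
  have hZ' : Z⁻¹ ≠ ∞ := ENNReal.inv_ne_top.mpr hZ₀
  simp_rw [div_eq_mul_inv, ← lintegral_mul_const' _ _ hZ']
  congr with ω
  rw [ENNReal.mul_rpow_of_ne_top (hf ω) hZ', ENNReal.mul_rpow_of_ne_top (hg ω) hZ',
    mul_mul_mul_comm, ← ENNReal.rpow_add _ _ (ENNReal.inv_ne_zero.mpr hZ) hZ', add_sub_cancel,
    ENNReal.rpow_one]

lemma lt_renyiDiv_of_lt_lintegral {p q : Ω → ℝ≥0∞} {l K : ℝ} (hl : 1 < l)
    (h : ENNReal.ofReal (Real.exp ((l - 1) * K)) < ∫⁻ ω, p ω ^ l * q ω ^ (1 - l) ∂ν) :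
    (K : EReal) < renyiDiv ν p q l := by
  have hl₀ : (0 : EReal) < ((l - 1 : ℝ) : EReal) := EReal.coe_pos.mpr (by linarith)
  rw [renyiDiv, EReal.coe_inv, mul_comm, ← div_eq_mul_inv,
    EReal.lt_div_iff hl₀ (EReal.coe_ne_top _), ← EReal.coe_mul, mul_comm,
    ← Real.log_exp ((l - 1) * K), ← ENNReal.log_ofReal_of_pos (Real.exp_pos _)]
  exact ENNReal.log_lt_log_iff.mpr h

end Renyi

section Gaussian

variable {E : Type*} [NormedAddCommGroup E] [InnerProductSpace ℝ E]

lemma integrable_exp_neg_mul_sq_norm [FiniteDimensional ℝ E] [MeasurableSpace E] [BorelSpace E]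
    {b : ℝ} (hb : 0 < b) : Integrable (fun w : E ↦ Real.exp (-b * ‖w‖ ^ 2)) := by
  refine (GaussianFourier.integrable_cexp_neg_mul_sq_norm_add (V := E) (b := b)
    (by simpa using hb) 0 0).norm.congr (.of_forall fun w ↦ ?_)
  simp [Complex.norm_exp, ← Complex.ofReal_pow, ← Complex.ofReal_mul]

lemma exp_neg_sq_norm_add_smul_mul_exp_inner {σsq : ℝ} (hσ : σsq ≠ 0) (w v : E) :
    Real.exp (-‖w + σsq • v‖ ^ 2 / (2 * σsq)) * Real.exp ⟪w + σsq • v, v⟫ =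
      Real.exp (σsq * ‖v‖ ^ 2 / 2) * Real.exp (-‖w‖ ^ 2 / (2 * σsq)) := by
  rw [← Real.exp_add, ← Real.exp_add, norm_add_sq_real, inner_add_left, real_inner_smul_left,
    real_inner_smul_right, norm_smul, real_inner_self_eq_norm_sq, Real.norm_eq_abs, mul_pow, sq_abs]
  congr 1
  field_simp
  ring

lemma lintegral_exp_neg_sq_norm_mul_exp_inner [MeasurableSpace E] [MeasurableAdd E]
    {μ : Measure E} [μ.IsAddRightInvariant] {σsq : ℝ} (hσ : σsq ≠ 0) (L : E → ℝ) (v : E) :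
    ∫⁻ w, ENNReal.ofReal (Real.exp (-‖w‖ ^ 2 / (2 * σsq)) * Real.exp ⟪w, v⟫ * L w) ∂μ =
      ENNReal.ofReal (Real.exp (σsq * ‖v‖ ^ 2 / 2)) *
        ∫⁻ w, ENNReal.ofReal (Real.exp (-‖w‖ ^ 2 / (2 * σsq)) * L (w + σsq • v)) ∂μ := by
  rw [← lintegral_add_right_eq_self _ (σsq • v), ← lintegral_const_mul' _ _ ENNReal.ofReal_ne_top]
  congr with w
  rw [← ENNReal.ofReal_mul (Real.exp_pos _).le, exp_neg_sq_norm_add_smul_mul_exp_inner hσ,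
    mul_assoc]

end Gaussian

lemma rpow_mul_rpow_one_sub_of_eq_exp_mul {x y t : ℝ} (hy : 0 < y) (hxy : x = Real.exp t * y)
    (l : ℝ) : x ^ l * y ^ (1 - l) = Real.exp ((l - 1) * t) * x := by
  rw [hxy, Real.mul_rpow (Real.exp_pos t).le hy.le, mul_assoc, ← Real.rpow_add hy, add_sub_cancel,
    Real.rpow_one, ← Real.exp_mul, ← mul_assoc, ← Real.exp_add]
  ring_nf

section Logistic

variable {E : Type*} [NormedAddCommGroup E] [InnerProductSpace ℝ E]

noncomputable def logisticLik (D : Fin n → E × ℝ) (w : E) : ℝ :=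
  ∏ i, Real.sigmoid ((D i).2 * ⟪w, (D i).1⟫)

def negFeatures (D : Fin n → E × ℝ) : Fin n → E × ℝ :=
  fun i ↦ (-(D i).1, (D i).2)

lemma logisticLik_pos (D : Fin n → E × ℝ) (w : E) : 0 < logisticLik D w :=
  Finset.prod_pos fun _ _ ↦ Real.sigmoid_pos _

lemma logisticLik_le_one (D : Fin n → E × ℝ) (w : E) : logisticLik D w ≤ 1 :=
  Finset.prod_le_one (fun _ _ ↦ Real.sigmoid_nonneg _) fun _ _ ↦ Real.sigmoid_le_one _

lemma continuous_logisticLik (D : Fin n → E × ℝ) : Continuous (logisticLik D) :=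
  continuous_finsetProd _ fun _ _ ↦ continuous_sigmoid.comp (by fun_prop)

lemma logisticLik_negFeatures (D : Fin n → E × ℝ) (w : E) :
    logisticLik (negFeatures D) w = logisticLik D (-w) := by
  simp only [logisticLik, negFeatures, inner_neg_right, inner_neg_left]

lemma logisticLik_eq_exp_inner_mul_neg (D : Fin n → E × ℝ) (w : E) :
    logisticLik D w = Real.exp ⟪w, ∑ i, (D i).2 • (D i).1⟫ * logisticLik D (-w) := by
  simp only [logisticLik, inner_sum, real_inner_smul_right, Real.exp_sum,
    ← Finset.prod_mul_distrib, inner_neg_left, mul_neg, ← Real.sigmoid_mul_rexp_neg]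
  refine Finset.prod_congr rfl fun i _ ↦ ?_
  rw [mul_left_comm, ← Real.exp_add, add_neg_cancel, Real.exp_zero, mul_one]

lemma logisticLik_lt_add_smul (D : Fin n → E × ℝ) {v : E}
    (hv : ∀ i, 0 ≤ (D i).2 * ⟪v, (D i).1⟫) (hv' : ∃ i, 0 < (D i).2 * ⟪v, (D i).1⟫)
    {t : ℝ} (ht : 0 < t) (w : E) : logisticLik D w < logisticLik D (w + t • v) := by
  have hshift : ∀ i, (D i).2 * ⟪w + t • v, (D i).1⟫ =
      (D i).2 * ⟪w, (D i).1⟫ + t * ((D i).2 * ⟪v, (D i).1⟫) := fun i ↦ by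
    rw [inner_add_left, real_inner_smul_left]; ring
  obtain ⟨j, hj⟩ := hv'
  refine Finset.prod_lt_prod (fun i _ ↦ Real.sigmoid_pos _)
    (fun i _ ↦ Real.sigmoid_le ?_) ⟨j, Finset.mem_univ j, Real.sigmoid_lt ?_⟩
  · rw [hshift]; nlinarith [hv i]
  · rw [hshift]; nlinarith

end Logistic

section Posterior

variable (σsq : ℝ) (D : Fin n → EuclideanSpace ℝ (Fin d) × ℝ)

lemma logisticUnnormPost_eq_mul_logisticLik (w : EuclideanSpace ℝ (Fin d)) :
    logisticUnnormPost σsq D w = Real.exp (-‖w‖ ^ 2 / (2 * σsq)) * logisticLik D w := by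
  simp only [logisticUnnormPost, logisticLik, Real.sigmoid_def, neg_mul]

lemma logisticUnnormPost_pos (w : EuclideanSpace ℝ (Fin d)) : 0 < logisticUnnormPost σsq D w := by
  rw [logisticUnnormPost_eq_mul_logisticLik]
  exact mul_pos (Real.exp_pos _) (logisticLik_pos D w)

lemma continuous_logisticUnnormPost : Continuous (logisticUnnormPost σsq D) := by
  simp_rw [funext (logisticUnnormPost_eq_mul_logisticLik σsq D)]
  exact (by fun_prop : Continuous _).mul (continuous_logisticLik D)

lemma logisticUnnormPost_negFeatures (w : EuclideanSpace ℝ (Fin d)) :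
    logisticUnnormPost σsq (negFeatures D) w = logisticUnnormPost σsq D (-w) := by
  rw [logisticUnnormPost_eq_mul_logisticLik, logisticUnnormPost_eq_mul_logisticLik,
    logisticLik_negFeatures, norm_neg]

lemma logisticPostDens_negFeatures (w : EuclideanSpace ℝ (Fin d)) :
    logisticPostDens σsq (negFeatures D) w = logisticPostDens σsq D (-w) := by
  simp only [logisticPostDens, logisticUnnormPost_negFeatures]
  rw [lintegral_neg_eq_self fun w ↦ ENNReal.ofReal (logisticUnnormPost σsq D w)]

lemma lintegral_logisticUnnormPost_ne_zero :
    ∫⁻ w, ENNReal.ofReal (logisticUnnormPost σsq D w) ≠ 0 := by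
  rw [← pos_iff_ne_zero,
    lintegral_pos_iff_support (continuous_logisticUnnormPost σsq D).measurable.ennreal_ofReal]
  simpa [Function.support, logisticUnnormPost_pos] using NeZero.ne volume

lemma lintegral_logisticUnnormPost_ne_top {σsq : ℝ} (hσ : 0 < σsq) :
    ∫⁻ w, ENNReal.ofReal (logisticUnnormPost σsq D w) ≠ ∞ := by
  refine (lt_of_le_of_lt (lintegral_mono fun w ↦ ENNReal.ofReal_le_ofReal ?_)
    (integrable_exp_neg_mul_sq_norm (inv_pos.mpr (mul_pos two_pos hσ))).lintegral_lt_top).ne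
  rw [logisticUnnormPost_eq_mul_logisticLik, neg_mul, inv_mul_eq_div, ← neg_div]
  exact mul_le_of_le_one_right (Real.exp_pos _).le (logisticLik_le_one D w)

lemma logisticUnnormPost_rpow_mul_neg_rpow (l : ℝ) (w : EuclideanSpace ℝ (Fin d)) :
    logisticUnnormPost σsq D w ^ l * logisticUnnormPost σsq D (-w) ^ (1 - l) =
      Real.exp (-‖w‖ ^ 2 / (2 * σsq)) * Real.exp ⟪w, (l - 1) • ∑ i, (D i).2 • (D i).1⟫ *
        logisticLik D w := by
  have hodds : logisticUnnormPost σsq D w =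
      Real.exp ⟪w, ∑ i, (D i).2 • (D i).1⟫ * logisticUnnormPost σsq D (-w) := by
    rw [logisticUnnormPost_eq_mul_logisticLik, logisticUnnormPost_eq_mul_logisticLik, norm_neg,
      logisticLik_eq_exp_inner_mul_neg, mul_left_comm]
  rw [rpow_mul_rpow_one_sub_of_eq_exp_mul (logisticUnnormPost_pos σsq D (-w)) hodds,
    logisticUnnormPost_eq_mul_logisticLik, real_inner_smul_right]
  ring

end Posterior

section Divergence

variable (D : Fin n → EuclideanSpace ℝ (Fin d) × ℝ)

lemma lintegral_rpow_logisticUnnormPost_mul_neg_rpow {σsq : ℝ} (hσ : σsq ≠ 0) (l : ℝ) :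
    ∫⁻ w, ENNReal.ofReal (logisticUnnormPost σsq D w) ^ l *
        ENNReal.ofReal (logisticUnnormPost σsq D (-w)) ^ (1 - l) =
      ENNReal.ofReal (Real.exp (σsq * ‖(l - 1) • ∑ i, (D i).2 • (D i).1‖ ^ 2 / 2)) *
        ∫⁻ w, ENNReal.ofReal (Real.exp (-‖w‖ ^ 2 / (2 * σsq)) *
          logisticLik D (w + σsq • (l - 1) • ∑ i, (D i).2 • (D i).1)) := by
  simp_rw [ENNReal.ofReal_rpow_of_pos (logisticUnnormPost_pos σsq D _),
    ← ENNReal.ofReal_mul (Real.rpow_nonneg (logisticUnnormPost_pos σsq D _).le _),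
    logisticUnnormPost_rpow_mul_neg_rpow]
  exact lintegral_exp_neg_sq_norm_mul_exp_inner hσ _ _

lemma lintegral_logisticUnnormPost_lt_shift {σsq : ℝ} (hσ : 0 < σsq) {v : EuclideanSpace ℝ (Fin d)}
    (hv : ∀ i, 0 ≤ (D i).2 * ⟪v, (D i).1⟫) (hv' : ∃ i, 0 < (D i).2 * ⟪v, (D i).1⟫)
    {t : ℝ} (ht : 0 < t) :
    ∫⁻ w, ENNReal.ofReal (logisticUnnormPost σsq D w) <
      ∫⁻ w, ENNReal.ofReal (Real.exp (-‖w‖ ^ 2 / (2 * σsq)) * logisticLik D (w + t • v)) := by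
  refine lintegral_strict_mono (NeZero.ne volume) (Continuous.aemeasurable ?_)
    (lintegral_logisticUnnormPost_ne_top D hσ) (.of_forall fun w ↦ ?_)
  · exact ENNReal.continuous_ofReal.comp
      ((by fun_prop : Continuous _).mul ((continuous_logisticLik D).comp (by fun_prop)))
  · rw [logisticUnnormPost_eq_mul_logisticLik, ENNReal.ofReal_lt_ofReal_iff
      (mul_pos (Real.exp_pos _) (logisticLik_pos D _))]
    exact mul_lt_mul_of_pos_left (logisticLik_lt_add_smul D hv hv' ht w) (Real.exp_pos _)

theorem lt_renyiDiv_logisticPostDens_negFeatures {σsq l : ℝ} (hσ : 0 < σsq) (hl : 1 < l)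
    (hD : ∀ i, 0 ≤ (D i).2 * ⟪∑ j, (D j).2 • (D j).1, (D i).1⟫)
    (hD' : ∃ i, 0 < (D i).2 * ⟪∑ j, (D j).2 • (D j).1, (D i).1⟫) :
    ((σsq * (l - 1) * ‖∑ i, (D i).2 • (D i).1‖ ^ 2 / 2 : ℝ) : EReal) <
      renyiDiv volume (logisticPostDens σsq D) (logisticPostDens σsq (negFeatures D)) l := by
  have hZ₀ := lintegral_logisticUnnormPost_ne_zero σsq D
  have hZ := lintegral_logisticUnnormPost_ne_top D hσ
  apply lt_renyiDiv_of_lt_lintegral hl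
  simp only [logisticPostDens_negFeatures]
  simp only [logisticPostDens]
  rw [lintegral_div_rpow_mul_div_rpow (fun _ ↦ ENNReal.ofReal_ne_top)
    (fun _ ↦ ENNReal.ofReal_ne_top) hZ₀ hZ, ENNReal.lt_div_iff_mul_lt (.inl hZ₀) (.inl hZ),
    lintegral_rpow_logisticUnnormPost_mul_neg_rpow D hσ.ne', smul_smul, norm_smul,
    Real.norm_eq_abs, mul_pow, sq_abs]
  convert ENNReal.mul_lt_mul_right (ENNReal.ofReal_pos.mpr (Real.exp_pos _)).ne'
    ENNReal.ofReal_ne_top (lintegral_logisticUnnormPost_lt_shift D hσ hD hD'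
      (mul_pos hσ (sub_pos.mpr hl))) using 4
  ring

end Divergence

theorem logistic_regression_rdp_lower_bound
    (hd : 1 < d) (hn : 1 ≤ n) (c β : ℝ) (hc : 0 < c) (hβ : 0 < β) :
    ∃ D D' : Fin n → EuclideanSpace ℝ (Fin d) × ℝ,
      (∀ i, ‖(D i).1‖ ≤ c ∧ (D i).2 ∈ ({-1, 1} : Set ℝ)) ∧
      (∀ i, ‖(D' i).1‖ ≤ c ∧ (D' i).2 ∈ ({-1, 1} : Set ℝ)) ∧
      Neighboring D D' ∧
      ∃ lam₀ : ℝ, ∀ lam : ℕ, lam₀ < (lam : ℝ) →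
        ((c ^ 2 * ((lam : ℝ) - 1) / (2 * n * β) : ℝ) : EReal) <
          renyiDiv volume (logisticPostDens ((n * β)⁻¹) D)
            (logisticPostDens ((n * β)⁻¹) D') (lam : ℝ) := by
  have : Nonempty (Fin d) := ⟨⟨0, by omega⟩⟩
  obtain ⟨x, hx⟩ := exists_norm_eq (EuclideanSpace ℝ (Fin d)) hc.le
  have hx₀ : x ≠ 0 := norm_pos_iff.mp (hx ▸ hc)
  have hx_ne_neg : x ≠ -x := fun h ↦ hx₀ <| by
    rw [eq_neg_iff_add_eq_zero, ← two_smul ℝ, smul_eq_zero] at h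
    exact h.resolve_left two_ne_zero
  let j : Fin n := ⟨0, hn⟩
  let D : Fin n → EuclideanSpace ℝ (Fin d) × ℝ := fun i ↦ (if i = j then x else 0, 1)
  have hs : ∑ i, (D i).2 • (D i).1 = x := by simp [D]
  have hbound : ∀ i, ‖(D i).1‖ ≤ c ∧ (D i).2 ∈ ({-1, 1} : Set ℝ) := fun i ↦ by
    by_cases hi : i = j <;> simp [D, hi, hx, hc.le]
  refine ⟨D, negFeatures D, hbound, fun i ↦ by simpa [negFeatures] using hbound i,
    ⟨j, fun i hi ↦ by simp [D, negFeatures, hi], by simpa [D, negFeatures] using hx_ne_neg⟩,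
    1, fun lam hlam ↦ ?_⟩
  have hpos : 0 < (n * β : ℝ)⁻¹ := inv_pos.mpr (mul_pos (by exact_mod_cast hn) hβ)
  convert lt_renyiDiv_logisticPostDens_negFeatures D hpos hlam ?_ ?_ using 2
  · rw [hs, hx]; field_simp
  · intro i; by_cases hi : i = j <;> simp [D, hi]
  · exact ⟨j, by simpa [D, hs, hx] using pow_pos hc 2⟩
end

section
/- For every dimension d ≥ 1, every σ > 0, every x ∈ ℝ^d with ‖x‖₂ = c, and every integer λ ≥ 1: (2πσ²)^{−d/2} · ∫_{ℝ^d} exp(−‖w‖²/(2σ²)) · (1 + exp(⟨w, x⟩))^{λ−1} · (1 + exp(−⟨w, x⟩))^{−λ} dw = (−1)^{λ−1}/2 + Σ_{i=1}^{λ−1} (−1)^{λ−1−i} · exp(i²σ²c²/2). -/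
/-!
With `t = ⟪w, x⟫`, the logistic factor is `(1 + eᵗ)ⁿ (1 + e⁻ᵗ)⁻⁽ⁿ⁺¹⁾ = eⁿᵗ · sigmoid t`, and since
`sigmoid t · (1 + e⁻ᵗ) = 1`, peeling off one power of `eᵗ` at a time turns it into the alternating
sum `∑ᵢ (-1)ⁿ⁻ⁱ eⁱᵗ + (-1)ⁿ sigmoid t`. Against the Gaussian weight each `eⁱᵗ` integrates to the
moment generating function `exp (i²σ²‖x‖²/2)`, while the sigmoid term integrates to one half of
the total mass because `sigmoid (-t) = 1 - sigmoid t` and the Gaussian is even.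
-/

open MeasureTheory Real
open scoped RealInnerProductSpace

lemma one_add_exp_pow_mul_one_add_exp_neg_zpow (n : ℕ) (t : ℝ) :
    (1 + exp t) ^ n * (1 + exp (-t)) ^ (-(n + 1 : ℤ)) = exp (n * t) * sigmoid t := by
  have h : 1 + exp t = exp t * (1 + exp (-t)) := by
    rw [mul_add, mul_one, ← exp_add, add_neg_cancel, exp_zero, add_comm]
  rw [h, mul_pow, ← exp_nat_mul, mul_assoc, ← zpow_natCast (1 + exp (-t)),
    ← zpow_add₀ (by positivity), sigmoid_def]
  ring_nf
  rw [zpow_neg_one]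

lemma exp_nat_mul_mul_sigmoid (n : ℕ) (t : ℝ) :
    exp (n * t) * sigmoid t =
      ∑ i ∈ Finset.Icc 1 n, (-1) ^ (n - i) * exp (i * t) + (-1) ^ n * sigmoid t := by
  induction n with
  | zero => simp
  | succ n ih =>
    have hstep : exp ((n + 1 : ℕ) * t) * sigmoid t =
        exp ((n + 1 : ℕ) * t) - exp (n * t) * sigmoid t := by
      have h1 : exp ((n + 1 : ℕ) * t) * exp (-t) = exp (n * t) := by
        rw [← exp_add]; push_cast; ring_nf
      have h2 : sigmoid t * (1 + exp (-t)) = 1 := inv_mul_cancel₀ (by positivity)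
      linear_combination exp ((n + 1 : ℕ) * t) * h2 - sigmoid t * h1
    have hsum : ∑ i ∈ Finset.Icc 1 (n + 1), (-1 : ℝ) ^ (n + 1 - i) * exp (i * t) =
        -∑ i ∈ Finset.Icc 1 n, (-1) ^ (n - i) * exp (i * t) + exp ((n + 1 : ℕ) * t) := by
      rw [Finset.sum_Icc_succ_top (by omega), Nat.sub_self, pow_zero, one_mul,
        ← Finset.sum_neg_distrib]
      congr 1
      refine Finset.sum_congr rfl fun i hi => ?_
      rw [Nat.sub_add_comm (Finset.mem_Icc.mp hi).2, pow_succ]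
      ring
    rw [hstep, ih, hsum, pow_succ]
    ring

section InnerProductSpace

variable {V : Type*} [NormedAddCommGroup V] [InnerProductSpace ℝ V] [MeasurableSpace V]
  [BorelSpace V]

lemma MeasureTheory.Integrable.mul_sigmoid_inner {μ : Measure V} {g : V → ℝ}
    (hg : Integrable g μ) (x : V) :
    Integrable (fun v ↦ g v * sigmoid ⟪v, x⟫) μ :=
  hg.mul_bdd (continuous_sigmoid.comp (continuous_id.inner continuous_const)).aestronglyMeasurable
    (ae_of_all _ fun v ↦ by simpa [abs_of_pos (sigmoid_pos _)] using sigmoid_le_one _)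

lemma integral_mul_sigmoid_inner_of_even {μ : Measure V} [μ.IsNegInvariant] {g : V → ℝ}
    (hg : Integrable g μ) (hg_even : ∀ v, g (-v) = g v) (x : V) :
    ∫ v, g v * sigmoid ⟪v, x⟫ ∂μ = (∫ v, g v ∂μ) / 2 := by
  have hint := hg.mul_sigmoid_inner x
  have hreflect : ∫ v, g v * sigmoid ⟪v, x⟫ ∂μ = ∫ v, g v * (1 - sigmoid ⟪v, x⟫) ∂μ := by
    rw [← integral_neg_eq_self]
    simp only [hg_even, inner_neg_left, sigmoid_neg]
  rw [hreflect, eq_div_iff two_ne_zero, mul_two]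
  nth_rewrite 2 [← hreflect]
  have hcompl : Integrable (fun v ↦ g v * (1 - sigmoid ⟪v, x⟫)) μ := by
    simp only [mul_sub, mul_one]
    exact hg.sub hint
  rw [← integral_add hcompl hint]
  simp_rw [← mul_add, sub_add_cancel, mul_one]

variable [FiniteDimensional ℝ V]

lemma integrable_rexp_neg_mul_sq_norm_add_mul_inner {b : ℝ} (hb : 0 < b) (k : ℝ) (x : V) :
    Integrable fun v : V ↦ rexp (-b * ‖v‖ ^ 2 + k * ⟪x, v⟫) := by
  have h := (GaussianFourier.integrable_cexp_neg_mul_sq_norm_add (V := V)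
    (b := b) (by simpa using hb) k x).norm
  refine h.congr (ae_of_all _ fun v ↦ ?_)
  simp [Complex.norm_exp, ← Complex.ofReal_pow]

lemma integral_rexp_neg_mul_sq_norm_add_mul_inner {b : ℝ} (hb : 0 < b) (k : ℝ) (x : V) :
    ∫ v : V, rexp (-b * ‖v‖ ^ 2 + k * ⟪x, v⟫) =
      (π / b) ^ (Module.finrank ℝ V / 2 : ℝ) * rexp (k ^ 2 * ‖x‖ ^ 2 / (4 * b)) := by
  have h := GaussianFourier.integral_cexp_neg_mul_sq_norm_add (V := V)
    (b := b) (by simpa using hb) k x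
  rw [← Complex.ofReal_inj, ← integral_complex_ofReal]
  push_cast
  rw [h, Complex.ofReal_cpow (by positivity)]
  push_cast
  rfl

lemma integral_gaussian_mul_logistic_pow {b : ℝ} (hb : 0 < b) (n : ℕ) (x : V) :
    ∫ v : V, rexp (-b * ‖v‖ ^ 2) * (1 + rexp ⟪v, x⟫) ^ n *
        (1 + rexp (-⟪v, x⟫)) ^ (-(n + 1 : ℤ)) =
      (π / b) ^ (Module.finrank ℝ V / 2 : ℝ) *
        ((-1) ^ n / 2 +
          ∑ i ∈ Finset.Icc 1 n, (-1) ^ (n - i) * rexp (i ^ 2 * ‖x‖ ^ 2 / (4 * b))) := by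
  have hexpand : ∀ v : V,
      rexp (-b * ‖v‖ ^ 2) * (1 + rexp ⟪v, x⟫) ^ n * (1 + rexp (-⟪v, x⟫)) ^ (-(n + 1 : ℤ)) =
        ∑ i ∈ Finset.Icc 1 n, (-1) ^ (n - i) * rexp (-b * ‖v‖ ^ 2 + i * ⟪x, v⟫) +
          (-1) ^ n * (rexp (-b * ‖v‖ ^ 2) * sigmoid ⟪v, x⟫) := by
    intro v
    rw [mul_assoc, one_add_exp_pow_mul_one_add_exp_neg_zpow, exp_nat_mul_mul_sigmoid, mul_add,
      Finset.mul_sum]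
    congr 1
    · refine Finset.sum_congr rfl fun i _ ↦ ?_
      rw [exp_add, real_inner_comm]
      ring
    · ring
  have hgauss : Integrable fun v : V ↦ rexp (-b * ‖v‖ ^ 2) := by
    simpa using integrable_rexp_neg_mul_sq_norm_add_mul_inner hb 0 x
  have hterms (i : ℕ) :
      Integrable fun v : V ↦ (-1) ^ (n - i) * rexp (-b * ‖v‖ ^ 2 + i * ⟪x, v⟫) :=
    (integrable_rexp_neg_mul_sq_norm_add_mul_inner hb i x).const_mul _
  have hsig : Integrable fun v : V ↦ (-1) ^ n * (rexp (-b * ‖v‖ ^ 2) * sigmoid ⟪v, x⟫) :=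
    (hgauss.mul_sigmoid_inner x).const_mul _
  simp_rw [hexpand]
  rw [integral_add (integrable_finsetSum _ fun i _ ↦ hterms i) hsig,
    integral_finsetSum _ fun i _ ↦ hterms i]
  simp_rw [integral_const_mul, integral_rexp_neg_mul_sq_norm_add_mul_inner hb,
    integral_mul_sigmoid_inner_of_even hgauss (fun v ↦ by rw [norm_neg]) x,
    GaussianFourier.integral_rexp_neg_mul_sq_norm hb]
  rw [mul_add, Finset.mul_sum, add_comm]
  congr 1
  · ring
  · exact Finset.sum_congr rfl fun i _ ↦ by ring

end InnerProductSpace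

theorem gaussian_integral_logistic_renyi_integrand_general
    (d : ℕ) (σ : ℝ) (hσ : 0 < σ) (c : ℝ)
    (x : EuclideanSpace ℝ (Fin d)) (hx : ‖x‖ = c) (lam : ℕ) (hlam : 1 ≤ lam) :
    (2 * π * σ ^ 2) ^ (-(d : ℝ) / 2) *
        ∫ w : EuclideanSpace ℝ (Fin d),
          Real.exp (-‖w‖ ^ 2 / (2 * σ ^ 2)) * (1 + Real.exp ⟪w, x⟫) ^ (lam - 1) *
            (1 + Real.exp (-⟪w, x⟫)) ^ (-(lam : ℤ)) =
      (-1 : ℝ) ^ (lam - 1) / 2 +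
        ∑ i ∈ Finset.Icc 1 (lam - 1),
          (-1 : ℝ) ^ (lam - 1 - i) * Real.exp ((i : ℝ) ^ 2 * σ ^ 2 * c ^ 2 / 2) := by
  obtain ⟨n, rfl⟩ : ∃ n, lam = n + 1 := ⟨lam - 1, by omega⟩
  have hb : 0 < (2 * σ ^ 2)⁻¹ := by positivity
  have key := integral_gaussian_mul_logistic_pow hb n x
  rw [finrank_euclideanSpace_fin, div_inv_eq_mul, show π * (2 * σ ^ 2) = 2 * π * σ ^ 2 by ring]
    at key
  have hcancel : (2 * π * σ ^ 2) ^ (-(d : ℝ) / 2) * (2 * π * σ ^ 2) ^ ((d : ℝ) / 2) = 1 := by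
    rw [← rpow_add (by positivity), neg_div, neg_add_cancel, rpow_zero]
  calc _ = (2 * π * σ ^ 2) ^ (-(d : ℝ) / 2) * ∫ w : EuclideanSpace ℝ (Fin d),
          rexp (-(2 * σ ^ 2)⁻¹ * ‖w‖ ^ 2) * (1 + rexp ⟪w, x⟫) ^ n *
            (1 + rexp (-⟪w, x⟫)) ^ (-(n + 1 : ℤ)) := by
        simp_rw [neg_mul, ← div_eq_inv_mul, neg_div]
        push_cast
        rfl
    _ = _ := by
        rw [key, ← mul_assoc, hcancel, one_mul, Nat.add_sub_cancel, ← hx]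
        congr 1
        refine Finset.sum_congr rfl fun i _ ↦ ?_
        field_simp
        ring_nf

theorem gaussian_integral_logistic_renyi_integrand
    (d : ℕ) (hd : 1 ≤ d) (σ : ℝ) (hσ : 0 < σ) (c : ℝ)
    (x : EuclideanSpace ℝ (Fin d)) (hx : ‖x‖ = c) (lam : ℕ) (hlam : 1 ≤ lam) :
    (2 * π * σ ^ 2) ^ (-(d : ℝ) / 2) *
        ∫ w : EuclideanSpace ℝ (Fin d),
          Real.exp (-‖w‖ ^ 2 / (2 * σ ^ 2)) * (1 + Real.exp ⟪w, x⟫) ^ (lam - 1) *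
            (1 + Real.exp (-⟪w, x⟫)) ^ (-(lam : ℤ)) =
      (-1 : ℝ) ^ (lam - 1) / 2 +
        ∑ i ∈ Finset.Icc 1 (lam - 1),
          (-1 : ℝ) ^ (lam - 1 - i) * Real.exp ((i : ℝ) ^ 2 * σ ^ 2 * c ^ 2 / 2) :=
  gaussian_integral_logistic_renyi_integrand_general d σ hσ c x hx lam hlam
end

section
/- Let P and Q be probability measures with P absolutely continuous with respect to Q, let Z = log(dP/dQ), and suppose K = ∫ Z dP is finite (K is the Kullback–Leibler divergence KL(P‖Q)). If a ≥ 0 is such that ∫ exp(t·(Z − K)) dP ≤ exp(a·t²) for all t ≥ 0, then for every λ > 1 the Rényi divergence satisfies D_λ(P ‖ Q) ≤ a·λ + K − a. -/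
/-!
STATEMENT 18: Let `P ≪ Q` be probability measures, `Z = log(dP/dQ)`, and
`K = ∫ Z dP` finite (the KL divergence).  If `a ≥ 0` satisfies
`∫ exp(t·(Z − K)) dP ≤ exp(a·t²)` for all `t ≥ 0`, then for every `λ > 1`,
`D_λ(P ‖ Q) ≤ a·λ + K − a`, where
`D_λ(P‖Q) = (1/(λ−1))·log ∫ (dP/dQ)^{λ−1} dP`.
-/

open MeasureTheory ENNReal

/-- Rényi divergence of order `l > 1` for `P ≪ Q`:
`D_l(P‖Q) = (1/(l−1))·log ∫ (dP/dQ)^{l−1} dP`, with value `+∞` if the integral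
diverges. -/
noncomputable def renyiDivAC {Ω : Type*} [MeasurableSpace Ω] (P Q : Measure Ω)
    (l : ℝ) : EReal :=
  (((l - 1)⁻¹ : ℝ) : EReal) * ENNReal.log (∫⁻ ω, (P.rnDeriv Q ω) ^ (l - 1) ∂P)

theorem renyi_bound_from_subgaussian_mgf {Ω : Type*} [MeasurableSpace Ω]
    (P Q : Measure Ω) [IsProbabilityMeasure P] [IsProbabilityMeasure Q]
    (hPQ : P ≪ Q) (Z : Ω → ℝ) (hZ : Z = fun ω => Real.log (P.rnDeriv Q ω).toReal)
    (hZint : Integrable Z P) (K : ℝ) (hK : K = ∫ ω, Z ω ∂P)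
    (a : ℝ) (ha : 0 ≤ a)
    (hmgf : ∀ t : ℝ, 0 ≤ t →
      ∫⁻ ω, ENNReal.ofReal (Real.exp (t * (Z ω - K))) ∂P ≤
        ENNReal.ofReal (Real.exp (a * t ^ 2))) :
    ∀ l : ℝ, 1 < l → renyiDivAC P Q l ≤ ((a * l + K - a : ℝ) : EReal) := by
  intro l hl
  set u : ℝ := l - 1 with hu
  have hu0 : 0 < u := by simp [hu]; linarith
  -- pointwise a.e. identity: rnDeriv ^ u = ofReal (exp (u * Z))
  have hae : ∀ᵐ ω ∂P, (P.rnDeriv Q ω) ^ u = ENNReal.ofReal (Real.exp (u * Z ω)) := by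
    have h1 : ∀ᵐ ω ∂P, 0 < P.rnDeriv Q ω := Measure.rnDeriv_pos hPQ
    have h2 : ∀ᵐ ω ∂P, P.rnDeriv Q ω < ⊤ := hPQ.ae_le (Measure.rnDeriv_lt_top P Q)
    filter_upwards [h1, h2] with ω hpos htop
    have hr : 0 < (P.rnDeriv Q ω).toReal := ENNReal.toReal_pos hpos.ne' htop.ne
    have : P.rnDeriv Q ω = ENNReal.ofReal (P.rnDeriv Q ω).toReal := by
      rw [ENNReal.ofReal_toReal htop.ne]
    rw [this, ENNReal.ofReal_rpow_of_pos hr, hZ]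
    congr 1
    rw [Real.rpow_def_of_pos hr, mul_comm]
  have hcongr : (∫⁻ ω, (P.rnDeriv Q ω) ^ u ∂P)
      = ∫⁻ ω, ENNReal.ofReal (Real.exp (u * Z ω)) ∂P := lintegral_congr_ae hae
  -- bound the lintegral
  have hbound : (∫⁻ ω, ENNReal.ofReal (Real.exp (u * Z ω)) ∂P)
      ≤ ENNReal.ofReal (Real.exp (a * u ^ 2 + u * K)) := by
    have heq : ∀ ω, ENNReal.ofReal (Real.exp (u * Z ω))
        = ENNReal.ofReal (Real.exp (u * (Z ω - K))) * ENNReal.ofReal (Real.exp (u * K)) := by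
      intro ω
      rw [← ENNReal.ofReal_mul (Real.exp_nonneg _), ← Real.exp_add]
      ring_nf
    calc (∫⁻ ω, ENNReal.ofReal (Real.exp (u * Z ω)) ∂P)
        = (∫⁻ ω, ENNReal.ofReal (Real.exp (u * (Z ω - K))) ∂P)
            * ENNReal.ofReal (Real.exp (u * K)) := by
          simp_rw [heq]
          have hm : AEMeasurable (fun ω => ENNReal.ofReal (Real.exp (u * (Z ω - K)))) P :=
            (Real.measurable_exp.comp_aemeasurable
              (((hZint.aemeasurable.sub aemeasurable_const)).const_mul u)).ennreal_ofReal
          exact lintegral_mul_const'' _ hm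
      _ ≤ ENNReal.ofReal (Real.exp (a * u ^ 2)) * ENNReal.ofReal (Real.exp (u * K)) := by
          exact mul_le_mul_left (hmgf u hu0.le) _
      _ = ENNReal.ofReal (Real.exp (a * u ^ 2 + u * K)) := by
          rw [← ENNReal.ofReal_mul (Real.exp_nonneg _), ← Real.exp_add]
  -- log bound
  have hlog : ENNReal.log (∫⁻ ω, (P.rnDeriv Q ω) ^ u ∂P)
      ≤ ((a * u ^ 2 + u * K : ℝ) : EReal) := by
    rw [hcongr]
    calc ENNReal.log (∫⁻ ω, ENNReal.ofReal (Real.exp (u * Z ω)) ∂P)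
        ≤ ENNReal.log (ENNReal.ofReal (Real.exp (a * u ^ 2 + u * K))) :=
          ENNReal.log_monotone hbound
      _ = ((a * u ^ 2 + u * K : ℝ) : EReal) := by
          rw [ENNReal.log_ofReal_of_pos (Real.exp_pos _), Real.log_exp]
  -- multiply by u⁻¹ ≥ 0
  have hfin : renyiDivAC P Q l
      ≤ ((u⁻¹ : ℝ) : EReal) * ((a * u ^ 2 + u * K : ℝ) : EReal) := by
    rw [renyiDivAC, ← hu]
    exact mul_le_mul_of_nonneg_left hlog (by
      exact_mod_cast inv_nonneg.mpr hu0.le)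
  refine hfin.trans_eq ?_
  rw [← EReal.coe_mul]
  congr 1
  field_simp
  ring
end
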